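/- arXiv:1807.00325 — 4 statements merged into one kernel-verified Lean document; each statement's English description precedes it below -/
import Mathlib

section
/- Let Ω be a nonempty set, L the set of bounded functions X : Ω → ℝ (ordered pointwise), and p̄ > 0. Suppose for each k ∈ (0, p̄] we are given a functional ρ_k : L → ℝ such that: (monotonicity) X ≤ Y pointwise implies ρ_k(Y) ≤ ρ_k(X); (translation invariance) ρ_k(X + r·1) = ρ_k(X) − r for every r ∈ ℝ; (normalization) ρ_k(0) = 0; and (monotone family) k ≤ k' implies ρ_k(X) ≤ ρ_{k'}(X) for all X. Define μ(X) = sup({0} ∪ {k ∈ (0, p̄] : ρ_k(X) ≤ 0}). Then μ is a satisficing measure, i.e.: (i) 0 ≤ μ(X) ≤ p̄ for all X; (ii) (attainment content) if X(ω) ≥ 0 for all ω then μ(X) = p̄; (iii) (non-attainment apathy) if sup_ω X(ω) < 0 then μ(X) = 0; (iv) (monotonicity) if X ≤ Y pointwise then μ(X) ≤ μ(Y); (v) (gain continuity) lim_{a→0⁺} μ(X + a·1) = μ(X). -/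
open Set Filter

/-- A real-valued function on `Ω` is bounded. -/
def IsBdd {Ω : Type*} (X : Ω → ℝ) : Prop := ∃ M : ℝ, ∀ ω, |X ω| ≤ M

/-- Brown–Sim duality, direct direction: a nondecreasing family of monotone,
translation-invariant, normalized risk measures `ρ_k`, `k ∈ (0, p̄]`, induces a
satisficing measure `μ(X) = sup ({0} ∪ {k ∈ (0, p̄] : ρ_k(X) ≤ 0})`. -/
theorem stmt_0 {Ω : Type*} [Nonempty Ω] (p : ℝ) (hp : 0 < p)
    (ρ : ℝ → (Ω → ℝ) → ℝ)
    (hmono : ∀ k ∈ Ioc (0 : ℝ) p, ∀ X Y : Ω → ℝ, IsBdd X → IsBdd Y →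
      (∀ ω, X ω ≤ Y ω) → ρ k Y ≤ ρ k X)
    (htrans : ∀ k ∈ Ioc (0 : ℝ) p, ∀ X : Ω → ℝ, IsBdd X → ∀ r : ℝ,
      ρ k (fun ω => X ω + r) = ρ k X - r)
    (hnorm : ∀ k ∈ Ioc (0 : ℝ) p, ρ k (fun _ => 0) = 0)
    (hfam : ∀ k ∈ Ioc (0 : ℝ) p, ∀ k' ∈ Ioc (0 : ℝ) p, k ≤ k' →
      ∀ X : Ω → ℝ, IsBdd X → ρ k X ≤ ρ k' X)
    (μ : (Ω → ℝ) → ℝ)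
    (hμ : ∀ X : Ω → ℝ, μ X = sSup ({0} ∪ {k : ℝ | k ∈ Ioc (0 : ℝ) p ∧ ρ k X ≤ 0})) :
    -- (i) μ takes values in [0, p̄]
    (∀ X : Ω → ℝ, IsBdd X → 0 ≤ μ X ∧ μ X ≤ p) ∧
    -- (ii) attainment content
    (∀ X : Ω → ℝ, IsBdd X → (∀ ω, 0 ≤ X ω) → μ X = p) ∧
    -- (iii) non-attainment apathy
    (∀ X : Ω → ℝ, IsBdd X → (⨆ ω, X ω) < 0 → μ X = 0) ∧
    -- (iv) monotonicity
    (∀ X Y : Ω → ℝ, IsBdd X → IsBdd Y → (∀ ω, X ω ≤ Y ω) → μ X ≤ μ Y) ∧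
    -- (v) gain continuity
    (∀ X : Ω → ℝ, IsBdd X →
      Tendsto (fun a : ℝ => μ (fun ω => X ω + a)) (nhdsWithin 0 (Ioi 0)) (nhds (μ X))) := by
  have hzero : IsBdd (fun _ : Ω => (0:ℝ)) := ⟨0, fun ω => by simp⟩
  have hbddadd : ∀ (X : Ω → ℝ), IsBdd X → ∀ a : ℝ, IsBdd (fun ω => X ω + a) := by
    rintro X ⟨M, hM⟩ a
    exact ⟨M + |a|, fun ω => (abs_add_le _ _).trans (add_le_add (hM ω) le_rfl)⟩
  set S : (Ω → ℝ) → Set ℝ :=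
    fun X => {0} ∪ {k : ℝ | k ∈ Ioc (0:ℝ) p ∧ ρ k X ≤ 0} with hS
  have hne : ∀ X, (S X).Nonempty := fun X => ⟨0, Or.inl rfl⟩
  have hsub : ∀ X, S X ⊆ Icc 0 p := by
    rintro X k (rfl | ⟨⟨h1, h2⟩, _⟩)
    · exact ⟨le_rfl, hp.le⟩
    · exact ⟨h1.le, h2⟩
  have hbdd : ∀ X, BddAbove (S X) := fun X => ⟨p, fun k hk => (hsub X hk).2⟩
  have hμ' : ∀ X, μ X = sSup (S X) := hμ
  have hi : ∀ X : Ω → ℝ, IsBdd X → 0 ≤ μ X ∧ μ X ≤ p := by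
    intro X _
    rw [hμ']
    exact ⟨le_csSup (hbdd X) (Or.inl rfl), csSup_le (hne X) fun k hk => (hsub X hk).2⟩
  have hiv : ∀ X Y : Ω → ℝ, IsBdd X → IsBdd Y → (∀ ω, X ω ≤ Y ω) → μ X ≤ μ Y := by
    intro X Y hX hY hXY
    rw [hμ', hμ']
    refine csSup_le_csSup (hbdd Y) (hne X) ?_
    rintro k (rfl | ⟨hk, hρ⟩)
    · exact Or.inl rfl
    · exact Or.inr ⟨hk, (hmono k hk X Y hX hY hXY).trans hρ⟩
  refine ⟨hi, ?_, ?_, hiv, ?_⟩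
  · -- attainment content
    intro X hX hXpos
    have hpmem : p ∈ Ioc (0:ℝ) p := ⟨hp, le_rfl⟩
    have : ρ p X ≤ 0 := by
      have := hmono p hpmem (fun _ => 0) X hzero hX hXpos
      rwa [hnorm p hpmem] at this
    refine le_antisymm (hi X hX).2 ?_
    rw [hμ']
    exact le_csSup (hbdd X) (Or.inr ⟨hpmem, this⟩)
  · -- non-attainment apathy
    intro X hX hsup
    obtain ⟨M, hM⟩ := id hX
    have hub : BddAbove (range X) := ⟨M, by rintro _ ⟨ω, rfl⟩; exact (abs_le.mp (hM ω)).2⟩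
    have hXle : ∀ ω, X ω ≤ (⨆ ω, X ω) := fun ω => le_ciSup hub ω
    have hpos : ∀ k ∈ Ioc (0:ℝ) p, 0 < ρ k X := by
      intro k hk
      have h1 : ρ k (fun ω => (0:ℝ) + (⨆ ω, X ω)) ≤ ρ k X :=
        hmono k hk X (fun ω => 0 + (⨆ ω, X ω)) hX
          (by simpa using hbddadd (fun _ => 0) hzero (⨆ ω, X ω))
          (fun ω => by simpa using hXle ω)
      rw [htrans k hk (fun _ => 0) hzero, hnorm k hk, zero_sub] at h1
      linarith
    have : S X = {0} := by
      apply Subset.antisymm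
      · rintro k (rfl | ⟨hk, hρ⟩)
        · rfl
        · exact absurd hρ (not_le.mpr (hpos k hk))
      · rintro k rfl; exact Or.inl rfl
    rw [hμ', this, csSup_singleton]
  · -- gain continuity
    intro X hX
    rw [Metric.tendsto_nhdsWithin_nhds]
    intro ε hε
    have hlo : ∀ a : ℝ, 0 < a → μ X ≤ μ (fun ω => X ω + a) :=
      fun a ha => hiv X _ hX (hbddadd X hX a) (fun ω => by linarith)
    by_cases hcase : p < μ X + ε
    · refine ⟨1, one_pos, fun a ha _ => ?_⟩
      have h1 := hlo a ha
      have h2 := (hi _ (hbddadd X hX a)).2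
      rw [Real.dist_eq, abs_lt]
      constructor <;> linarith
    · push_neg at hcase
      have hμ0 := (hi X hX).1
      have hkIoc : μ X + ε / 2 ∈ Ioc (0:ℝ) p := ⟨by positivity, by linarith⟩
      have hklt : μ X < μ X + ε / 2 := by linarith
      have hρk : ∀ a : ℝ, 0 < a → μ X + ε ≤ μ (fun ω => X ω + a) → ρ (μ X + ε / 2) X ≤ a := by
        intro a ha hcon
        have hlt : μ X + ε / 2 < sSup (S (fun ω => X ω + a)) := by
          rw [← hμ']; linarith
        obtain ⟨k', hk', hkk'⟩ := exists_lt_of_lt_csSup (hne _) hlt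
        rcases hk' with rfl | ⟨hk'Ioc, hρk'⟩
        · exact absurd hkk' (by linarith [hkIoc.1])
        · have := (hfam _ hkIoc k' hk'Ioc hkk'.le _ (hbddadd X hX a)).trans hρk'
          rw [htrans _ hkIoc X hX a] at this
          linarith
      have hρpos : 0 < ρ (μ X + ε / 2) X := by
        by_contra h
        push_neg at h
        have : μ X + ε / 2 ∈ S X := Or.inr ⟨hkIoc, h⟩
        have := le_csSup (hbdd X) this
        rw [← hμ'] at this
        linarith
      refine ⟨ρ (μ X + ε / 2) X, hρpos, fun a ha hd => ?_⟩
      have ha' : (0:ℝ) < a := ha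
      have hda : a < ρ (μ X + ε / 2) X := by
        rw [Real.dist_eq, sub_zero, abs_of_pos ha'] at hd; exact hd
      have hub : μ (fun ω => X ω + a) < μ X + ε := by
        by_contra hcon
        push_neg at hcon
        exact absurd (hρk a ha' hcon) (not_le.mpr hda)
      have h1 := hlo a ha'
      rw [Real.dist_eq, abs_lt]
      constructor <;> linarith
end

section
/- Let Ω be a nonempty set, L the set of bounded functions X : Ω → ℝ (ordered pointwise), and p̄ > 0. Let μ : L → ℝ be a satisficing measure, i.e.: 0 ≤ μ(X) ≤ p̄ for all X; if X(ω) ≥ 0 for all ω then μ(X) = p̄; if X(ω) < 0 for all ω then μ(X) = 0; if X ≤ Y pointwise then μ(X) ≤ μ(Y); and lim_{a→0⁺} μ(X + a·1) = μ(X). For k ∈ (0, p̄] define ρ_k(X) = inf{a ∈ ℝ : μ(X + a·1) ≥ k}. Then: (i) for every k ∈ (0, p̄] and every X ∈ L, the set {a ∈ ℝ : μ(X + a·1) ≥ k} is nonempty and bounded below, so ρ_k(X) is a well-defined real number; (ii) (translation invariance) ρ_k(X + r·1) = ρ_k(X) − r for every r ∈ ℝ; (iii) (monotonicity) X ≤ Y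 pointwise implies ρ_k(Y) ≤ ρ_k(X); (iv) k ≤ k' implies ρ_k(X) ≤ ρ_{k'}(X); (v) (recovery) μ(X) = sup({0} ∪ {k ∈ (0, p̄] : ρ_k(X) ≤ 0}). -/
/-!
Fix `X`. The map `a ↦ μ(X + a)` is nondecreasing, equals `p̄` for large `a` and `0` for very
negative `a`, so for `0 < k ≤ p̄` its upper level set `{a : k ≤ μ(X + a)}` is a nonempty upper
set of `ℝ` that is bounded below, and `ρ_k(X)` is its infimum. Translating `X` translates the
level set, enlarging `X` or lowering `k` enlarges it, which gives (ii)–(iv). For (v), the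
level set contains every `a > ρ_k(X)`, so `ρ_k(X) ≤ 0` means `k ≤ μ(X + ε)` for all `ε > 0`,
hence `k ≤ μ(X)` by gain continuity; conversely `ρ_{μ(X)}(X) ≤ 0` by monotonicity, so `μ(X)`
is the greatest element of the set whose supremum is taken.
-/

open Set Filter

theorem csInf_preimage_add_const {α : Type*} [ConditionallyCompleteLattice α] [AddCommGroup α]
    [IsOrderedAddMonoid α] {S : Set α} (hne : S.Nonempty) (hbdd : BddBelow S) (r : α) :
    sInf ((· + r) ⁻¹' S) = sInf S - r := by
  have : (· + r) ⁻¹' S = OrderIso.addRight (-r) '' S := by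
    ext a; simp [← sub_eq_add_neg, sub_eq_iff_eq_add]
  rw [this, ← OrderIso.map_csInf' _ hne hbdd, OrderIso.addRight_apply, sub_eq_add_neg]

theorem IsUpperSet.Ioi_csInf_subset {α : Type*} [ConditionallyCompleteLinearOrder α]
    {S : Set α} (hS : IsUpperSet S) (hne : S.Nonempty) : Ioi (sInf S) ⊆ S := fun _ hx =>
  let ⟨_, ha, hax⟩ := exists_lt_of_csInf_lt hne hx
  hS hax.le ha

theorem csInf_nonpos_of_Ioi_subset {S : Set ℝ} (hbdd : BddBelow S) (h : Ioi 0 ⊆ S) :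
    sInf S ≤ 0 :=
  (csInf_le_csInf hbdd nonempty_Ioi h).trans_eq csInf_Ioi

namespace IsBdd

variable {Ω : Type*} {X : Ω → ℝ}

theorem add_const (h : IsBdd X) (a : ℝ) : IsBdd (fun ω => X ω + a) := by
  obtain ⟨M, hM⟩ := h
  exact ⟨M + |a|, fun ω => (abs_add_le _ _).trans (by linarith [hM ω])⟩

theorem exists_add_const_nonneg (h : IsBdd X) : ∃ M, ∀ ω, 0 ≤ X ω + M := by
  obtain ⟨M, hM⟩ := h
  exact ⟨M, fun ω => by linarith [(abs_le.mp (hM ω)).1]⟩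

theorem exists_forall_add_neg (h : IsBdd X) : ∃ M, ∀ a < M, ∀ ω, X ω + a < 0 := by
  obtain ⟨M, hM⟩ := h
  exact ⟨-M, fun a ha ω => by linarith [(abs_le.mp (hM ω)).2]⟩

end IsBdd

/-- The acceptance set `{a : μ(X + a) ≥ k}` whose infimum is the risk `ρ_k(X)`. -/
def levelSet {Ω : Type*} (μ : (Ω → ℝ) → ℝ) (k : ℝ) (X : Ω → ℝ) : Set ℝ :=
  {a | k ≤ μ (fun ω => X ω + a)}

namespace levelSet

variable {Ω : Type*} {μ : (Ω → ℝ) → ℝ} {p k k' : ℝ} {X Y : Ω → ℝ}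

theorem isUpperSet
    (hmono : ∀ X Y : Ω → ℝ, IsBdd X → IsBdd Y → (∀ ω, X ω ≤ Y ω) → μ X ≤ μ Y)
    (hX : IsBdd X) : IsUpperSet (levelSet μ k X) := fun a b hab ha =>
  ha.trans (hmono _ _ (hX.add_const a) (hX.add_const b) fun ω => by linarith)

theorem nonempty (hattain : ∀ X : Ω → ℝ, IsBdd X → (∀ ω, 0 ≤ X ω) → μ X = p)
    (hk : k ≤ p) (hX : IsBdd X) : (levelSet μ k X).Nonempty := by
  obtain ⟨M, hM⟩ := hX.exists_add_const_nonneg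
  exact ⟨M, hk.trans (hattain _ (hX.add_const M) hM).ge⟩

theorem bddBelow (hapathy : ∀ X : Ω → ℝ, IsBdd X → (∀ ω, X ω < 0) → μ X = 0)
    (hk : 0 < k) (hX : IsBdd X) : BddBelow (levelSet μ k X) := by
  obtain ⟨M, hM⟩ := hX.exists_forall_add_neg
  refine ⟨M, fun a ha => not_lt.mp fun haM => ?_⟩
  have : k ≤ 0 := (hapathy _ (hX.add_const a) (hM a haM)) ▸ ha
  linarith

theorem add_const (r : ℝ) :
    levelSet μ k (fun ω => X ω + r) = (· + r) ⁻¹' levelSet μ k X := by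
  simp only [levelSet, preimage_ofPred_eq, add_assoc, add_comm r]

theorem mono
    (hmono : ∀ X Y : Ω → ℝ, IsBdd X → IsBdd Y → (∀ ω, X ω ≤ Y ω) → μ X ≤ μ Y)
    (hX : IsBdd X) (hY : IsBdd Y) (hXY : ∀ ω, X ω ≤ Y ω) :
    levelSet μ k X ⊆ levelSet μ k Y := fun a ha =>
  ha.trans (hmono _ _ (hX.add_const a) (hY.add_const a) fun ω => by linarith [hXY ω])

theorem subset_of_le (hkk' : k ≤ k') : levelSet μ k' X ⊆ levelSet μ k X := fun _ ha =>
  hkk'.trans ha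

theorem Ioi_zero_subset_self
    (hmono : ∀ X Y : Ω → ℝ, IsBdd X → IsBdd Y → (∀ ω, X ω ≤ Y ω) → μ X ≤ μ Y)
    (hX : IsBdd X) : Ioi 0 ⊆ levelSet μ (μ X) X := fun ε hε =>
  hmono _ _ hX (hX.add_const ε) fun ω => by linarith [mem_Ioi.mp hε]

theorem le_of_csInf_nonpos
    (hmono : ∀ X Y : Ω → ℝ, IsBdd X → IsBdd Y → (∀ ω, X ω ≤ Y ω) → μ X ≤ μ Y)
    (hgain : ∀ X : Ω → ℝ, IsBdd X →
      Tendsto (fun a : ℝ => μ (fun ω => X ω + a)) (nhdsWithin 0 (Ioi 0)) (nhds (μ X)))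
    (hX : IsBdd X) (hne : (levelSet μ k X).Nonempty) (h : sInf (levelSet μ k X) ≤ 0) :
    k ≤ μ X := by
  have hIoi : Ioi 0 ⊆ levelSet μ k X :=
    (Ioi_subset_Ioi h).trans ((isUpperSet hmono hX).Ioi_csInf_subset hne)
  exact ge_of_tendsto (hgain X hX) (eventually_nhdsWithin_of_forall hIoi)

end levelSet

theorem stmt_1_general {Ω : Type*} (p : ℝ)
    (μ : (Ω → ℝ) → ℝ)
    (hrange : ∀ X : Ω → ℝ, IsBdd X → 0 ≤ μ X ∧ μ X ≤ p)
    (hattain : ∀ X : Ω → ℝ, IsBdd X → (∀ ω, 0 ≤ X ω) → μ X = p)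
    (hapathy : ∀ X : Ω → ℝ, IsBdd X → (∀ ω, X ω < 0) → μ X = 0)
    (hmono : ∀ X Y : Ω → ℝ, IsBdd X → IsBdd Y → (∀ ω, X ω ≤ Y ω) → μ X ≤ μ Y)
    (hgain : ∀ X : Ω → ℝ, IsBdd X →
      Tendsto (fun a : ℝ => μ (fun ω => X ω + a)) (nhdsWithin 0 (Ioi 0)) (nhds (μ X)))
    (ρ : ℝ → (Ω → ℝ) → ℝ)
    (hρ : ∀ (k : ℝ) (X : Ω → ℝ), ρ k X = sInf {a : ℝ | k ≤ μ (fun ω => X ω + a)}) :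
    -- (i) the defining set is nonempty and bounded below, so ρ_k(X) is well defined
    (∀ k ∈ Ioc (0 : ℝ) p, ∀ X : Ω → ℝ, IsBdd X →
      {a : ℝ | k ≤ μ (fun ω => X ω + a)}.Nonempty ∧
      BddBelow {a : ℝ | k ≤ μ (fun ω => X ω + a)}) ∧
    -- (ii) translation invariance
    (∀ k ∈ Ioc (0 : ℝ) p, ∀ X : Ω → ℝ, IsBdd X → ∀ r : ℝ,
      ρ k (fun ω => X ω + r) = ρ k X - r) ∧
    -- (iii) monotonicity
    (∀ k ∈ Ioc (0 : ℝ) p, ∀ X Y : Ω → ℝ, IsBdd X → IsBdd Y →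
      (∀ ω, X ω ≤ Y ω) → ρ k Y ≤ ρ k X) ∧
    -- (iv) the family is nondecreasing in k
    (∀ k ∈ Ioc (0 : ℝ) p, ∀ k' ∈ Ioc (0 : ℝ) p, k ≤ k' →
      ∀ X : Ω → ℝ, IsBdd X → ρ k X ≤ ρ k' X) ∧
    -- (v) recovery of μ
    (∀ X : Ω → ℝ, IsBdd X →
      μ X = sSup ({0} ∪ {k : ℝ | k ∈ Ioc (0 : ℝ) p ∧ ρ k X ≤ 0})) := by
  have hρ' : ∀ k X, ρ k X = sInf (levelSet μ k X) := hρ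
  have hne := fun k (hk : k ∈ Ioc (0 : ℝ) p) X (hX : IsBdd X) =>
    levelSet.nonempty hattain hk.2 hX
  have hbdd := fun k (hk : k ∈ Ioc (0 : ℝ) p) X (hX : IsBdd X) =>
    levelSet.bddBelow hapathy hk.1 hX
  refine ⟨fun k hk X hX => ⟨hne k hk X hX, hbdd k hk X hX⟩, ?_, ?_, ?_, ?_⟩
  · intro k hk X hX r
    rw [hρ', hρ', levelSet.add_const, csInf_preimage_add_const (hne k hk X hX) (hbdd k hk X hX)]
  · intro k hk X Y hX hY hXY
    rw [hρ', hρ']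
    exact csInf_le_csInf (hbdd k hk Y hY) (hne k hk X hX) (levelSet.mono hmono hX hY hXY)
  · intro k hk k' hk' hkk' X hX
    rw [hρ', hρ']
    exact csInf_le_csInf (hbdd k hk X hX) (hne k' hk' X hX) (levelSet.subset_of_le hkk')
  · intro X hX
    refine (IsGreatest.csSup_eq ⟨?_, ?_⟩).symm
    · rcases (hrange X hX).1.eq_or_lt with h0 | h0
      · exact Or.inl h0.symm
      · have hk : μ X ∈ Ioc 0 p := ⟨h0, (hrange X hX).2⟩
        refine Or.inr ⟨hk, (hρ' _ _).trans_le ?_⟩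
        exact csInf_nonpos_of_Ioi_subset (hbdd _ hk X hX) (levelSet.Ioi_zero_subset_self hmono hX)
    · rintro k (rfl | ⟨hk, hρk⟩)
      · exact (hrange X hX).1
      · rw [hρ'] at hρk
        exact levelSet.le_of_csInf_nonpos hmono hgain hX (hne k hk X hX) hρk

/-- Brown–Sim duality, converse direction: every satisficing measure `μ` arises from the
nondecreasing family of monotone, translation-invariant risk measures
`ρ_k(X) = inf {a : μ(X + a) ≥ k}` via `μ(X) = sup ({0} ∪ {k ∈ (0, p̄] : ρ_k(X) ≤ 0})`. -/
theorem stmt_1 {Ω : Type*} [Nonempty Ω] (p : ℝ) (hp : 0 < p)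
    (μ : (Ω → ℝ) → ℝ)
    (hrange : ∀ X : Ω → ℝ, IsBdd X → 0 ≤ μ X ∧ μ X ≤ p)
    (hattain : ∀ X : Ω → ℝ, IsBdd X → (∀ ω, 0 ≤ X ω) → μ X = p)
    (hapathy : ∀ X : Ω → ℝ, IsBdd X → (∀ ω, X ω < 0) → μ X = 0)
    (hmono : ∀ X Y : Ω → ℝ, IsBdd X → IsBdd Y → (∀ ω, X ω ≤ Y ω) → μ X ≤ μ Y)
    (hgain : ∀ X : Ω → ℝ, IsBdd X →
      Tendsto (fun a : ℝ => μ (fun ω => X ω + a)) (nhdsWithin 0 (Ioi 0)) (nhds (μ X)))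
    (ρ : ℝ → (Ω → ℝ) → ℝ)
    (hρ : ∀ (k : ℝ) (X : Ω → ℝ), ρ k X = sInf {a : ℝ | k ≤ μ (fun ω => X ω + a)}) :
    -- (i) the defining set is nonempty and bounded below, so ρ_k(X) is well defined
    (∀ k ∈ Ioc (0 : ℝ) p, ∀ X : Ω → ℝ, IsBdd X →
      {a : ℝ | k ≤ μ (fun ω => X ω + a)}.Nonempty ∧
      BddBelow {a : ℝ | k ≤ μ (fun ω => X ω + a)}) ∧
    -- (ii) translation invariance
    (∀ k ∈ Ioc (0 : ℝ) p, ∀ X : Ω → ℝ, IsBdd X → ∀ r : ℝ,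
      ρ k (fun ω => X ω + r) = ρ k X - r) ∧
    -- (iii) monotonicity
    (∀ k ∈ Ioc (0 : ℝ) p, ∀ X Y : Ω → ℝ, IsBdd X → IsBdd Y →
      (∀ ω, X ω ≤ Y ω) → ρ k Y ≤ ρ k X) ∧
    -- (iv) the family is nondecreasing in k
    (∀ k ∈ Ioc (0 : ℝ) p, ∀ k' ∈ Ioc (0 : ℝ) p, k ≤ k' →
      ∀ X : Ω → ℝ, IsBdd X → ρ k X ≤ ρ k' X) ∧
    -- (v) recovery of μ
    (∀ X : Ω → ℝ, IsBdd X →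
      μ X = sSup ({0} ∪ {k : ℝ | k ∈ Ioc (0 : ℝ) p ∧ ρ k X ≤ 0})) :=
  stmt_1_general p μ hrange hattain hapathy hmono hgain ρ hρ
end

section
/- Let (Ω, F, P) be a probability space and Z an integrable real random variable (representing X − τ, the payoff minus the target). Then sSup{ 1 − α : α ∈ (0, 1] and there exists η < 0 with η + (1/α)·E[(Z − η)₊] ≤ 0 } = sSup{ E[min(−a·Z, 1)] : a ∈ (0, ∞) }, where sSup denotes the real supremum (with the convention that the supremum of the empty set is 0, as for Lean's sSup on ℝ). In other words, the CVaR-constrained satisficing optimization problem max{1 − α : α ∈ (0,1], CVaR-type constraint inf_{η<0}(η + (1/α)E[(Z−η)₊]) ≤ 0} has the same optimal value as the unconstrained concave maximization sup_{a>0} E[min(−aZ, 1)]. -/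
/-!
Substituting `a = -1/η` turns the CVaR constraint `η + E[(Z - η)₊]/α ≤ 0` with `η < 0` into
`g a ≤ α` for `g a = E[(a Z + 1)₊]` and `a > 0`, while `E[min(-a Z, 1)] = 1 - g a` because
`min (-t) 1 = 1 - (t + 1)₊`. The satisficing problem is therefore `sup {1 - α : α ∈ (0,1], α ≥ g a}`
and the concave problem is `sup {1 - g a}`; these agree because `g ≥ 0` and `g a → 1` as `a → 0`,
which also covers the case where the first set is empty and its supremum is `0` by convention.
-/

open MeasureTheory Set

section SupremumComparison

variable {ι : Type*} (s : Set ι) (g : ι → ℝ)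

lemma bddAbove_one_sub_image (hg : ∀ a ∈ s, 0 ≤ g a) : BddAbove {x | ∃ a ∈ s, x = 1 - g a} :=
  ⟨1, by rintro _ ⟨a, ha, rfl⟩; linarith [hg a ha]⟩

lemma sSup_one_sub_image_nonneg (hg : ∀ a ∈ s, 0 ≤ g a) (hlim : ∀ ε > 0, ∃ a ∈ s, g a ≤ 1 + ε) :
    0 ≤ sSup {x | ∃ a ∈ s, x = 1 - g a} := by
  refine le_of_forall_pos_le_add fun ε hε => ?_
  obtain ⟨a, ha, hga⟩ := hlim ε hε
  linarith [le_csSup (bddAbove_one_sub_image s g hg) ⟨a, ha, rfl⟩]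

lemma sSup_one_sub_Ioc_eq_sSup_one_sub (hg : ∀ a ∈ s, 0 ≤ g a)
    (hlim : ∀ ε > 0, ∃ a ∈ s, g a ≤ 1 + ε) :
    sSup {x : ℝ | ∃ α ∈ Ioc (0 : ℝ) 1, (∃ a ∈ s, g a ≤ α) ∧ x = 1 - α} =
      sSup {x | ∃ a ∈ s, x = 1 - g a} := by
  set A := {x : ℝ | ∃ α ∈ Ioc (0 : ℝ) 1, (∃ a ∈ s, g a ≤ α) ∧ x = 1 - α}
  have hA : BddAbove A := ⟨1, by rintro _ ⟨α, ⟨hα, -⟩, -, rfl⟩; linarith⟩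
  have hA₀ : 0 ≤ sSup A := Real.sSup_nonneg <| by rintro _ ⟨α, ⟨-, hα⟩, -, rfl⟩; linarith
  apply le_antisymm
  · rcases A.eq_empty_or_nonempty with hA_empty | hA_ne
    · rw [hA_empty, Real.sSup_empty]
      exact sSup_one_sub_image_nonneg s g hg hlim
    · refine csSup_le hA_ne ?_
      rintro _ ⟨α, -, ⟨a, ha, hgα⟩, rfl⟩
      linarith [le_csSup (bddAbove_one_sub_image s g hg) ⟨a, ha, rfl⟩]
  · obtain ⟨a₀, ha₀, -⟩ := hlim 1 one_pos
    refine csSup_le ⟨_, a₀, ha₀, rfl⟩ ?_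
    rintro _ ⟨a, ha, rfl⟩
    rcases le_or_gt (g a) 1 with hga | hga
    · refine le_of_forall_pos_le_add fun ε hε => ?_
      set α := max (g a) (min ε 1)
      have hα : α ∈ Ioc (0 : ℝ) 1 :=
        ⟨(lt_min hε one_pos).trans_le (le_max_right _ _), max_le hga (min_le_right _ _)⟩
      have hαε : α ≤ g a + ε :=
        max_le (by linarith) ((min_le_left _ _).trans (by linarith [hg a ha]))
      linarith [le_csSup hA ⟨α, hα, ⟨a, ha, le_max_left _ _⟩, rfl⟩]
    · linarith

end SupremumComparison

section Satisficing

variable {Ω : Type*} [MeasurableSpace Ω] {P : Measure Ω} {Z : Ω → ℝ}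

lemma integral_min_neg_mul_one [IsProbabilityMeasure P] (hZ : Integrable Z P) (a : ℝ) :
    ∫ ω, min (-(a * Z ω)) 1 ∂P = 1 - ∫ ω, max (a * Z ω + 1) 0 ∂P := by
  have hmin : ∀ ω, min (-(a * Z ω)) 1 = 1 - max (a * Z ω + 1) 0 := fun ω => by
    rw [← min_sub_sub_left, sub_zero]; congr 1; ring
  have hint : Integrable (fun ω => max (a * Z ω + 1) 0) P :=
    ((hZ.const_mul a).add (integrable_const 1)).pos_part
  simp_rw [hmin]
  rw [integral_sub (integrable_const 1) hint]
  simp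

lemma integral_max_mul_add_one {a : ℝ} (ha : 0 < a) :
    ∫ ω, max (a * Z ω + 1) 0 ∂P = a * ∫ ω, max (Z ω - -a⁻¹) 0 ∂P := by
  rw [← integral_const_mul]
  congr 1 with ω
  rw [mul_max_of_nonneg _ _ ha.le, mul_zero, mul_sub, mul_neg, mul_inv_cancel₀ ha.ne',
    sub_neg_eq_add]

lemma exists_integral_max_mul_add_one_le [IsProbabilityMeasure P] (hZ : Integrable Z P) {ε : ℝ}
    (hε : 0 < ε) : ∃ a > 0, ∫ ω, max (a * Z ω + 1) 0 ∂P ≤ 1 + ε := by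
  set C := ∫ ω, |Z ω| ∂P
  have hC : 0 ≤ C := integral_nonneg fun ω => abs_nonneg _
  set a := ε / (C + 1)
  have ha : 0 < a := by positivity
  have haC : a * C ≤ ε := by
    rw [div_mul_eq_mul_div, div_le_iff₀ (by positivity)]; nlinarith
  have hbound : ∀ ω, max (a * Z ω + 1) 0 ≤ a * |Z ω| + 1 := fun ω =>
    max_le (by nlinarith [mul_le_mul_of_nonneg_left (le_abs_self (Z ω)) ha.le]) (by positivity)
  refine ⟨a, ha, ?_⟩
  calc ∫ ω, max (a * Z ω + 1) 0 ∂P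
      ≤ ∫ ω, (a * |Z ω| + 1) ∂P :=
        integral_mono ((hZ.const_mul a).add (integrable_const 1)).pos_part
          ((hZ.abs.const_mul a).add (integrable_const 1)) hbound
    _ = a * C + 1 := by
        rw [integral_add (hZ.abs.const_mul a) (integrable_const 1), integral_const_mul]; simp [C]
    _ ≤ 1 + ε := by linarith

lemma exists_cvar_constraint_iff {α : ℝ} (hα : 0 < α) :
    (∃ η : ℝ, η < 0 ∧ η + (1 / α) * ∫ ω, max (Z ω - η) 0 ∂P ≤ 0) ↔
      ∃ a ∈ Ioi (0 : ℝ), ∫ ω, max (a * Z ω + 1) 0 ∂P ≤ α := by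
  have constraint_iff : ∀ a > 0, -a⁻¹ + (1 / α) * ∫ ω, max (Z ω - -a⁻¹) 0 ∂P ≤ 0 ↔
      ∫ ω, max (a * Z ω + 1) 0 ∂P ≤ α := fun a ha => by
    rw [integral_max_mul_add_one ha, one_div_mul_eq_div, neg_add_nonpos_iff, div_le_iff₀ hα,
      le_inv_mul_iff₀ ha]
  constructor
  · rintro ⟨η, hη, h⟩
    have ha : 0 < -η⁻¹ := neg_pos.2 (inv_lt_zero.2 hη)
    refine ⟨-η⁻¹, ha, (constraint_iff _ ha).1 ?_⟩
    simpa only [inv_neg, inv_inv, neg_neg] using h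
  · rintro ⟨a, ha, h⟩
    exact ⟨-a⁻¹, neg_neg_iff_pos.2 (inv_pos.2 ha), (constraint_iff a ha).2 h⟩

end Satisficing

/-- Theorem 5.4: the CVaR-constrained satisficing problem
`max {1 − α : α ∈ (0,1], ∃ η < 0, η + (1/α)·E[(Z − η)₊] ≤ 0}` has the same optimal value as
the unconstrained concave problem `sup_{a > 0} E[min(−a·Z, 1)]`. -/
theorem stmt_2 {Ω : Type*} [MeasurableSpace Ω] (P : Measure Ω) [IsProbabilityMeasure P]
    (Z : Ω → ℝ) (hZ : Integrable Z P) :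
    sSup {x : ℝ | ∃ α ∈ Ioc (0 : ℝ) 1,
        (∃ η : ℝ, η < 0 ∧ η + (1 / α) * ∫ ω, max (Z ω - η) 0 ∂P ≤ 0) ∧ x = 1 - α} =
    sSup {x : ℝ | ∃ a : ℝ, 0 < a ∧ x = ∫ ω, min (-(a * Z ω)) 1 ∂P} := by
  set g : ℝ → ℝ := fun a => ∫ ω, max (a * Z ω + 1) 0 ∂P
  have hA : {x : ℝ | ∃ α ∈ Ioc (0 : ℝ) 1,
      (∃ η : ℝ, η < 0 ∧ η + (1 / α) * ∫ ω, max (Z ω - η) 0 ∂P ≤ 0) ∧ x = 1 - α} =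
      {x : ℝ | ∃ α ∈ Ioc (0 : ℝ) 1, (∃ a ∈ Ioi 0, g a ≤ α) ∧ x = 1 - α} := by
    ext x
    refine exists_congr fun α => and_congr_right fun hα => ?_
    rw [exists_cvar_constraint_iff hα.1]
  have hB : {x : ℝ | ∃ a : ℝ, 0 < a ∧ x = ∫ ω, min (-(a * Z ω)) 1 ∂P} =
      {x | ∃ a ∈ Ioi 0, x = 1 - g a} := by
    simp only [integral_min_neg_mul_one hZ, g, mem_Ioi]
  rw [hA, hB]
  exact sSup_one_sub_Ioc_eq_sSup_one_sub _ g
    (fun a _ => integral_nonneg fun ω => le_max_right _ _)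
    fun ε hε => exists_integral_max_mul_add_one_le hZ hε
end

section
/- Let (Ω, F, P) be a probability space, and let v : ℝ → ℝ be convex, nondecreasing, and satisfy v(t) ≥ t for all t ∈ ℝ. For an essentially bounded real random variable X define ρ(X) = inf_{η∈ℝ}{ η + E[v(X − η)] }. Then: (i) ρ(X) is a well-defined real number with ρ(X) ≥ E[X]; (ii) (monotonicity) if X ≤ Y almost surely then ρ(X) ≤ ρ(Y); (iii) (translation invariance) ρ(X + c·1) = ρ(X) + c for every c ∈ ℝ; (iv) (convexity) ρ(λX + (1−λ)Y) ≤ λρ(X) + (1−λ)ρ(Y) for every λ ∈ [0, 1] and all essentially bounded X, Y. -/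
/-!
All four properties are read off the objective `η ↦ η + E[v(X − η)]`. For bounded `X` and
monotone `v`, `v(X − η)` is bounded, hence integrable, and `v(t) ≥ t` bounds the objective
below by `E[X]`, so the infimum is a genuine one. Adding `c` to `X` shifts the objective's
argument by `c` and its value by `c`; convexity of `v` makes the objective jointly convex in
`(X, η)`, and joint convexity survives taking the infimum over `η`.
-/

open MeasureTheory Set

namespace MeasureTheory

variable {Ω : Type*} [MeasurableSpace Ω] {P : Measure Ω}

theorem MemLp.comp_monotone {v : ℝ → ℝ} (hv : Monotone v) {X : Ω → ℝ} (hX : MemLp X ⊤ P) :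
    MemLp (fun ω => v (X ω)) ⊤ P := by
  obtain ⟨C, hC⟩ := eLpNormEssSup_lt_top_iff_isBoundedUnder.mp
    (eLpNorm_exponent_top (f := X) ▸ hX.eLpNorm_lt_top)
  refine memLp_top_of_bound (hv.measurable.comp_aemeasurable hX.1.aemeasurable).aestronglyMeasurable
    (max |v (-C)| |v C|) ?_
  filter_upwards [hC] with ω hω
  have hXC : |X ω| ≤ C := hω
  rw [Real.norm_eq_abs]
  exact abs_le_max_abs_abs (hv (neg_le_of_abs_le hXC)) (hv (le_of_abs_le hXC))

variable {v : ℝ → ℝ}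

theorem integrable_comp_sub_const [IsFiniteMeasure P] (hv : Monotone v) {X : Ω → ℝ}
    (hX : MemLp X ⊤ P) (η : ℝ) : Integrable (fun ω => v (X ω - η)) P :=
  (hX.comp_monotone fun _ _ h => hv (sub_le_sub_right h η)).integrable le_top

noncomputable def oceObjective (P : Measure Ω) (v : ℝ → ℝ) (X : Ω → ℝ) (η : ℝ) : ℝ :=
  η + ∫ ω, v (X ω - η) ∂P

noncomputable def oce (P : Measure Ω) (v : ℝ → ℝ) (X : Ω → ℝ) : ℝ :=
  ⨅ η, oceObjective P v X η

section Objective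

variable {X Y : Ω → ℝ}

theorem integral_le_oceObjective [IsProbabilityMeasure P] (hvt : ∀ t, t ≤ v t)
    (hX : Integrable X P) (hvX : ∀ η, Integrable (fun ω => v (X ω - η)) P) (η : ℝ) :
    ∫ ω, X ω ∂P ≤ oceObjective P v X η := by
  have : ∫ ω, (X ω - η) ∂P ≤ ∫ ω, v (X ω - η) ∂P :=
    integral_mono (hX.sub (integrable_const η)) (hvX η) fun ω => hvt _
  rw [integral_sub hX (integrable_const η)] at this
  simp only [integral_const, probReal_univ, one_smul] at this
  unfold oceObjective
  linarith

theorem oceObjective_mono (hv : Monotone v) {η : ℝ} (hX : Integrable (fun ω => v (X ω - η)) P)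
    (hY : Integrable (fun ω => v (Y ω - η)) P) (hXY : X ≤ᵐ[P] Y) :
    oceObjective P v X η ≤ oceObjective P v Y η := by
  refine add_le_add_right (integral_mono_ae hX hY ?_) η
  filter_upwards [hXY] with ω h
  exact hv (sub_le_sub_right h η)

theorem oceObjective_add_const (X : Ω → ℝ) (c η : ℝ) :
    oceObjective P v (fun ω => X ω + c) η = oceObjective P v X (η - c) + c := by
  have (ω : Ω) : X ω + c - η = X ω - (η - c) := by ring
  simp only [oceObjective, this]
  ring

theorem oceObjective_convexComb_le (hv : ConvexOn ℝ univ v) {a b : ℝ} (ha : 0 ≤ a) (hb : 0 ≤ b)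
    (hab : a + b = 1) {η₁ η₂ : ℝ} (hX : Integrable (fun ω => v (X ω - η₁)) P)
    (hY : Integrable (fun ω => v (Y ω - η₂)) P)
    (hZ : Integrable (fun ω => v (a * X ω + b * Y ω - (a * η₁ + b * η₂))) P) :
    oceObjective P v (fun ω => a * X ω + b * Y ω) (a * η₁ + b * η₂) ≤
      a * oceObjective P v X η₁ + b * oceObjective P v Y η₂ := by
  have hpointwise (ω : Ω) : v (a * X ω + b * Y ω - (a * η₁ + b * η₂)) ≤
      a * v (X ω - η₁) + b * v (Y ω - η₂) := by
    rw [show a * X ω + b * Y ω - (a * η₁ + b * η₂) = a * (X ω - η₁) + b * (Y ω - η₂) by ring]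
    exact hv.2 (mem_univ _) (mem_univ _) ha hb hab
  have hint : ∫ ω, v (a * X ω + b * Y ω - (a * η₁ + b * η₂)) ∂P ≤
      ∫ ω, (a * v (X ω - η₁) + b * v (Y ω - η₂)) ∂P :=
    integral_mono hZ ((hX.const_mul a).add (hY.const_mul b)) hpointwise
  rw [integral_add (hX.const_mul a) (hY.const_mul b), integral_const_mul,
    integral_const_mul] at hint
  simp only [oceObjective]
  linarith

end Objective

section Oce

variable [IsProbabilityMeasure P] {X Y : Ω → ℝ}

theorem bddBelow_range_oceObjective (hv : Monotone v) (hvt : ∀ t, t ≤ v t) (hX : MemLp X ⊤ P) :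
    BddBelow (range (oceObjective P v X)) :=
  ⟨∫ ω, X ω ∂P, forall_mem_range.2 <|
    integral_le_oceObjective hvt (hX.integrable le_top) (integrable_comp_sub_const hv hX)⟩

theorem integral_le_oce (hv : Monotone v) (hvt : ∀ t, t ≤ v t) (hX : MemLp X ⊤ P) :
    ∫ ω, X ω ∂P ≤ oce P v X :=
  le_ciInf <| integral_le_oceObjective hvt (hX.integrable le_top) (integrable_comp_sub_const hv hX)

theorem oce_mono (hv : Monotone v) (hvt : ∀ t, t ≤ v t) (hX : MemLp X ⊤ P) (hY : MemLp Y ⊤ P)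
    (hXY : X ≤ᵐ[P] Y) : oce P v X ≤ oce P v Y :=
  ciInf_mono (bddBelow_range_oceObjective hv hvt hX) fun η =>
    oceObjective_mono hv (integrable_comp_sub_const hv hX η) (integrable_comp_sub_const hv hY η)
      hXY

theorem oce_add_const (hv : Monotone v) (hvt : ∀ t, t ≤ v t) (hX : MemLp X ⊤ P) (c : ℝ) :
    oce P v (fun ω => X ω + c) = oce P v X + c := by
  have hbdd : BddBelow (range fun η => oceObjective P v X (η - c)) := by
    convert bddBelow_range_oceObjective hv hvt hX using 1
    exact (Equiv.subRight c).surjective.range_comp (oceObjective P v X)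
  simp only [oce, oceObjective_add_const]
  rw [← ciInf_add hbdd]
  exact congrArg (· + c) ((Equiv.subRight c).iInf_comp (g := oceObjective P v X))

theorem oce_convexComb_le (hconv : ConvexOn ℝ univ v) (hv : Monotone v) (hvt : ∀ t, t ≤ v t)
    (hX : MemLp X ⊤ P) (hY : MemLp Y ⊤ P) {a b : ℝ} (ha : 0 ≤ a) (hb : 0 ≤ b) (hab : a + b = 1) :
    oce P v (fun ω => a * X ω + b * Y ω) ≤ a * oce P v X + b * oce P v Y := by
  have hZ : MemLp (fun ω => a * X ω + b * Y ω) ⊤ P := (hX.const_mul a).add (hY.const_mul b)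
  simp only [oce, Real.mul_iInf_of_nonneg ha, Real.mul_iInf_of_nonneg hb]
  refine le_ciInf_add_ciInf fun η₁ η₂ => ?_
  exact (ciInf_le (bddBelow_range_oceObjective hv hvt hZ) _).trans <|
    oceObjective_convexComb_le hconv ha hb hab (integrable_comp_sub_const hv hX η₁)
      (integrable_comp_sub_const hv hY η₂) (integrable_comp_sub_const hv hZ _)

end Oce

end MeasureTheory

/-- The optimized-certainty-equivalent functional `ρ(X) = inf_η { η + E[v(X − η)] }`, built
from a convex, nondecreasing `v` with `v(t) ≥ t`, is a convex risk measure (loss convention):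
it is finite with `ρ(X) ≥ E[X]`, monotone, translation invariant, and convex. -/
theorem stmt_6 {Ω : Type*} [MeasurableSpace Ω] (P : Measure Ω) [IsProbabilityMeasure P]
    (v : ℝ → ℝ) (hconv : ConvexOn ℝ univ v) (hmono : Monotone v) (hts : ∀ t : ℝ, t ≤ v t)
    (ρ : (Ω → ℝ) → ℝ)
    (hρ : ∀ X : Ω → ℝ, ρ X = ⨅ η : ℝ, (η + ∫ ω, v (X ω - η) ∂P)) :
    -- (i) well-defined, with ρ(X) ≥ E[X]
    (∀ X : Ω → ℝ, MemLp X ⊤ P →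
      BddBelow (range fun η : ℝ => η + ∫ ω, v (X ω - η) ∂P) ∧ (∫ ω, X ω ∂P) ≤ ρ X) ∧
    -- (ii) monotonicity
    (∀ X Y : Ω → ℝ, MemLp X ⊤ P → MemLp Y ⊤ P → (∀ᵐ ω ∂P, X ω ≤ Y ω) → ρ X ≤ ρ Y) ∧
    -- (iii) translation invariance
    (∀ X : Ω → ℝ, MemLp X ⊤ P → ∀ c : ℝ, ρ (fun ω => X ω + c) = ρ X + c) ∧
    -- (iv) convexity
    (∀ X Y : Ω → ℝ, MemLp X ⊤ P → MemLp Y ⊤ P → ∀ t ∈ Icc (0 : ℝ) 1,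
      ρ (fun ω => t * X ω + (1 - t) * Y ω) ≤ t * ρ X + (1 - t) * ρ Y) := by
  obtain rfl : ρ = oce P v := funext hρ
  exact ⟨fun X hX => ⟨bddBelow_range_oceObjective hmono hts hX, integral_le_oce hmono hts hX⟩,
    fun X Y hX hY => oce_mono hmono hts hX hY,
    fun X hX => oce_add_const hmono hts hX,
    fun X Y hX hY t ht =>
      oce_convexComb_le hconv hmono hts hX hY ht.1 (sub_nonneg.2 ht.2) (add_sub_cancel t 1)⟩
end
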